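/- For integer M ≥ 2 and nonnegative integer n, the value of η^{(M)}_{n,l} at r = 0 is η^{(M)}_{n,l}(0) = δ_{l,0} · (2(-1)^n / Γ(M/2)) · sqrt((n + (M-1)/2) Γ(n+M-1)/n!), where the value at 0 is taken as the limit r → 0⁺. -/

import Mathlib

open Finset

/-- Pochhammer (rising factorial) `(a)_k`. -/
noncomputable def poch (a : ℝ) (k : ℕ) : ℝ := ∏ i ∈ Finset.range k, (a + i)

/-- Terminating Gauss hypergeometric series `₂F₁(-n, b; c; x)`. -/
noncomputable def F21fin (n : ℕ) (b c x : ℝ) : ℝ :=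
  ∑ k ∈ Finset.range (n + 1),
    poch (-(n : ℝ)) k * poch b k / (poch c k * k.factorial) * x ^ k

/-- The radial functions `η^{(M)}_{n,l}(r)`. -/
noncomputable def eta (M n l : ℕ) (r : ℝ) : ℝ :=
  2 / Real.Gamma ((l : ℝ) + M / 2) *
    Real.sqrt (((n : ℝ) + l + ((M : ℝ) - 1) / 2) *
      Real.Gamma ((n : ℝ) + 2 * l + M - 1) / n.factorial) *
    (r ^ l / (r ^ 2 + 1) ^ ((l : ℝ) + M / 2)) *
    F21fin n ((n : ℝ) + 2 * l + M - 1) ((l : ℝ) + M / 2) (1 / (r ^ 2 + 1))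

/-! Every factor of `η` is continuous in `r` (the base `r² + 1` of the real power is positive), so
the limit is the value at `r = 0`. There `r ^ l` vanishes unless `l = 0`, and for `l = 0` the
hypergeometric factor is `₂F₁(-n, n + 2c - 1; c; 1)` with `c = M / 2`. By Chu–Vandermonde,
`₂F₁(-n, b; c; 1) = (c - b)ₙ / (c)ₙ`, and for `b = n + 2c - 1` the reflection
`(1 - c - n)ₙ = (-1)ⁿ (c)ₙ` leaves `(-1)ⁿ`. -/

section Pochhammer

open Polynomial

theorem poch_eq_eval_ascPochhammer (a : ℝ) (k : ℕ) : poch a k = (ascPochhammer ℝ k).eval a := by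
  induction k with
  | zero => simp [poch]
  | succ k ih => rw [poch, prod_range_succ, ← poch, ih, ascPochhammer_succ_eval]

theorem poch_add (a : ℝ) (k m : ℕ) : poch a (k + m) = poch a k * poch (a + k) m := by
  simp only [poch, prod_range_add, Nat.cast_add, add_assoc]

theorem poch_eq_eval_descPochhammer (a : ℝ) (k : ℕ) :
    poch a k = (descPochhammer ℝ k).eval (a + k - 1) := by
  rw [descPochhammer_eval_eq_ascPochhammer, poch_eq_eval_ascPochhammer]
  ring_nf

theorem poch_neg (x : ℝ) (k : ℕ) : poch (-x) k = (-1) ^ k * (descPochhammer ℝ k).eval x := by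
  rw [poch_eq_eval_ascPochhammer, ascPochhammer_eval_neg_eq_descPochhammer]

theorem poch_neg_natCast (n k : ℕ) : poch (-n) k = (-1) ^ k * (k.factorial * n.choose k) := by
  rw [poch_neg, descPochhammer_eval_eq_descFactorial, Nat.descFactorial_eq_factorial_mul_choose,
    Nat.cast_mul]

theorem descPochhammer_eval_add {R : Type*} [CommRing R] (r s : R) (n : ℕ) :
    (descPochhammer R n).eval (r + s) = ∑ ij ∈ antidiagonal n,
      n.choose ij.1 * ((descPochhammer R ij.1).eval r * (descPochhammer R ij.2).eval s) := by
  simp only [descPochhammer_eval_eq_ascPochhammer, ← ascPochhammer_smeval_eq_eval,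
    ← descPochhammer_smeval_eq_ascPochhammer]
  exact Ring.descPochhammer_smeval_add n (Commute.all r s)

/-- Chu–Vandermonde: after multiplying by `(c)ₙ`, the `k`-th term of the series is the `k`-th term
of the Vandermonde expansion of the falling factorial of `-b + (c + n - 1)`. -/
theorem F21fin_one_eq_poch_div (n : ℕ) (b c : ℝ) (hc : poch c n ≠ 0) :
    F21fin n b c 1 = poch (c - b) n / poch c n := by
  rw [eq_div_iff hc, F21fin, sum_mul, poch_eq_eval_descPochhammer (c - b),
    show c - b + n - 1 = -b + (c + n - 1) by ring, descPochhammer_eval_add,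
    Nat.sum_antidiagonal_eq_sum_range_succ
      (fun i j => (n.choose i : ℝ) * ((descPochhammer ℝ i).eval (-b) *
        (descPochhammer ℝ j).eval (c + n - 1)))]
  refine sum_congr rfl fun k hk => ?_
  obtain ⟨m, rfl⟩ := Nat.exists_eq_add_of_le (Nat.lt_succ_iff.mp (mem_range.mp hk))
  rw [poch_add] at hc ⊢
  have hck : poch c k ≠ 0 := left_ne_zero_of_mul hc
  rw [poch_neg_natCast, ← neg_neg b, poch_neg, neg_neg, poch_eq_eval_descPochhammer (c + k),
    Nat.add_sub_cancel_left]
  have hsign : ((-1 : ℝ) ^ k) ^ 2 = 1 := by rw [← pow_mul, pow_mul', neg_one_sq, one_pow]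
  field_simp
  rw [hsign, one_pow, Nat.cast_add, ← add_assoc]
  ring

end Pochhammer

theorem F21fin_one_eq_neg_one_pow (n : ℕ) (c : ℝ) (hc : poch c n ≠ 0) :
    F21fin n (n + 2 * c - 1) c 1 = (-1) ^ n := by
  rw [F21fin_one_eq_poch_div n _ c hc, show c - (n + 2 * c - 1) = -(c + n - 1) by ring, poch_neg,
    ← poch_eq_eval_descPochhammer, mul_div_cancel_right₀ _ hc]

theorem continuous_eta (M n l : ℕ) : Continuous (eta M n l) := by
  unfold eta F21fin
  fun_prop (disch := intros; positivity)

theorem eta_zero (M n l : ℕ) (hM : 0 < M) :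
    eta M n l 0 = (if l = 0 then 1 else 0) * (2 * (-1 : ℝ) ^ n / Real.Gamma ((M : ℝ) / 2)) *
        Real.sqrt (((n : ℝ) + ((M : ℝ) - 1) / 2) * Real.Gamma ((n : ℝ) + M - 1) /
          n.factorial) := by
  rcases eq_or_ne l 0 with rfl | hl
  · have hc : poch ((M : ℝ) / 2) n ≠ 0 := by
      rw [poch_eq_eval_ascPochhammer]
      exact (ascPochhammer_pos n _ (by positivity)).ne'
    simp only [eta, Nat.cast_zero, zero_add, mul_zero, add_zero, pow_zero, ne_eq,
      OfNat.ofNat_ne_zero, not_false_eq_true, zero_pow, Real.one_rpow, div_one, if_true]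
    rw [show (n : ℝ) + M - 1 = n + 2 * (M / 2) - 1 by ring, F21fin_one_eq_neg_one_pow n _ hc]
    ring
  · simp [eta, hl]

theorem stmt10 (M : ℕ) (hM : 2 ≤ M) (n l : ℕ) :
    Filter.Tendsto (fun r : ℝ => eta M n l r) (nhdsWithin 0 (Set.Ioi 0))
      (nhds ((if l = 0 then 1 else 0) * (2 * (-1 : ℝ) ^ n / Real.Gamma ((M : ℝ) / 2)) *
        Real.sqrt (((n : ℝ) + ((M : ℝ) - 1) / 2) * Real.Gamma ((n : ℝ) + M - 1) /
          n.factorial))) := by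
  rw [← eta_zero M n l (by omega)]
  exact ((continuous_eta M n l).tendsto 0).mono_left nhdsWithin_le_nhds
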